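/- arXiv:2003.11664 — 4 statements merged into one kernel-verified Lean document; each statement's English description precedes it below -/
import Mathlib

section
/- The number of crossingless matchings between n left points and n + 2k right points with no left returns and only unnested right returns equals C(n+k, k). -/
/-!
A right return `(p, q)` with `q > p + 1` would force the arc at `p + 1` to be a right return nested
inside it, so every right return is a "domino" `(p, p + 1)`. Hence the last point is either the
end of a domino or, by noncrossing, joined to the first left point. Removing that arc leaves a
diagram of the same kind with `k - 1` dominoes or with `n - 1` left points (for `k = 0` there is
no domino, as the `n` left points use up all `n` right points), which is Pascal's rule
`C(n + k, k) = C(n + k - 1, k - 1) + C(n - 1 + k, k)`.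
-/

def NCM (N : ℕ) : Type :=
  {f : Fin N → Fin N //
    (∀ i, f (f i) = i) ∧ (∀ i, f i ≠ i) ∧
    (∀ i j : Fin N, i < j → j < f i → f i < f j → False)}

instance (N : ℕ) : Fintype (NCM N) := by unfold NCM; infer_instance

structure IsNoncrossingMatching {N : ℕ} (f : Fin N → Fin N) : Prop where
  apply_apply : ∀ i, f (f i) = i
  apply_ne : ∀ i, f i ≠ i
  noncrossing : ∀ i j, i < j → j < f i → f i < f j → False

/-- The points `i < n` are the left points. In `not_nested`, the outer return starting at a right
point already forces both arcs to be right returns. -/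
structure IsAdmissible (n : ℕ) {N : ℕ} (f : Fin N → Fin N) : Prop
    extends IsNoncrossingMatching f where
  le_apply_of_lt : ∀ i : Fin N, (i : ℕ) < n → n ≤ (f i : ℕ)
  not_nested : ∀ i j : Fin N, n ≤ (i : ℕ) → i < j → j < f j → f j < f i → False

namespace IsNoncrossingMatching

variable {N : ℕ} {f : Fin N → Fin N}

theorem injective (hf : IsNoncrossingMatching f) : Function.Injective f :=
  Function.LeftInverse.injective hf.apply_apply

theorem apply_mem_Ioo (hf : IsNoncrossingMatching f) {i j : Fin N} (hij : i < j)
    (hji : j < f i) : i < f j ∧ f j < f i := by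
  have hne : f j ≠ i := fun h => by rw [← h, hf.apply_apply] at hji; exact hji.false
  refine ⟨lt_of_not_ge fun h => hf.noncrossing (f j) i (h.lt_of_ne hne) ?_ ?_,
    lt_of_not_ge fun h => hf.noncrossing i j hij hji (h.lt_of_ne (hf.injective.ne hij.ne))⟩
  · rwa [hf.apply_apply]
  · rwa [hf.apply_apply]

end IsNoncrossingMatching

namespace IsAdmissible

variable {n N M : ℕ}

theorem comap {f : Fin N → Fin N} (hf : IsAdmissible n f) {m : ℕ} {e : Fin M → Fin N}
    (he : StrictMono e) (hn : ∀ i, (e i : ℕ) < n ↔ (i : ℕ) < m) {g : Fin M → Fin M}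
    (hfg : ∀ i, f (e i) = e (g i)) : IsAdmissible m g where
  apply_apply i := he.injective <| by rw [← hfg, ← hfg, hf.apply_apply]
  apply_ne i h := hf.apply_ne (e i) (by rw [hfg, h])
  noncrossing i j hij hji hgg := hf.noncrossing (e i) (e j) (he hij) (by rw [hfg]; exact he hji)
    (by rw [hfg, hfg]; exact he hgg)
  le_apply_of_lt i hi := by
    have := hf.le_apply_of_lt (e i) ((hn i).2 hi)
    rw [hfg] at this
    exact not_lt.1 fun h => this.not_gt ((hn _).2 h)
  not_nested i j hi hij hj hji :=
    hf.not_nested (e i) (e j) (not_lt.1 fun h => hi.not_gt ((hn i).1 h)) (he hij)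
      (by rw [hfg]; exact he hj) (by rw [hfg, hfg]; exact he hji)

theorem val_apply_eq_succ {f : Fin N → Fin N} (hf : IsAdmissible n f) {p : Fin N}
    (hp : n ≤ (p : ℕ)) (hlt : p < f p) : (f p : ℕ) = p + 1 := by
  by_contra hne
  have hq : (p : ℕ) + 1 < f p := by rw [Fin.lt_def] at hlt; omega
  obtain ⟨q, hq_val⟩ : ∃ q : Fin N, (q : ℕ) = p + 1 := ⟨⟨p + 1, by omega⟩, rfl⟩
  obtain ⟨hpq, hqp⟩ := hf.apply_mem_Ioo (i := p) (j := q) (by rw [Fin.lt_def]; omega)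
    (by rw [Fin.lt_def]; omega)
  have hqq : q < f q := by
    have := Fin.val_ne_of_ne (hf.apply_ne q)
    rw [Fin.lt_def] at hpq ⊢
    omega
  exact hf.not_nested p q hp (by rw [Fin.lt_def]; omega) hqq hqp

theorem val_apply_last_of_le {f : Fin (M + 2) → Fin (M + 2)} (hf : IsAdmissible n f)
    (h : n ≤ (f (Fin.last _) : ℕ)) : (f (Fin.last _) : ℕ) = M := by
  have hlt : f (Fin.last _) < Fin.last _ := (Fin.le_last _).lt_of_ne (hf.apply_ne _)
  have := hf.val_apply_eq_succ h (by rwa [hf.apply_apply])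
  rw [hf.apply_apply, Fin.val_last] at this
  omega

theorem apply_last_eq_zero {f : Fin (M + 1) → Fin (M + 1)} (hf : IsAdmissible n f)
    (h : (f (Fin.last _) : ℕ) < n) : f (Fin.last _) = 0 := by
  by_contra hne
  have h0 : (0 : Fin (M + 1)) < f (Fin.last _) := Fin.pos_iff_ne_zero.2 hne
  have hleft := hf.le_apply_of_lt 0 (by rw [Fin.val_zero]; omega)
  have hlast : f 0 < Fin.last _ := (Fin.le_last _).lt_of_ne fun h0' => hne (by
    rw [← h0', hf.apply_apply])
  have := (hf.apply_mem_Ioo h0 (by rw [Fin.lt_def]; omega)).2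
  rw [hf.apply_apply] at this
  exact hlast.not_gt this

theorem val_apply_lt_of_le {f : Fin N → Fin N} (hf : IsAdmissible n f) (hN : N ≤ n + n)
    {i : Fin N} (hi : n ≤ (i : ℕ)) : (f i : ℕ) < n := by
  let r : Fin n → Fin n := fun j => ⟨f ⟨j, by omega⟩ - n, by omega⟩
  have hr : Function.Surjective r := Finite.injective_iff_surjective.1 fun j j' h => by
    have h1 := hf.le_apply_of_lt ⟨j, by omega⟩ j.2
    have h2 := hf.le_apply_of_lt ⟨j', by omega⟩ j'.2
    have : (⟨j, by omega⟩ : Fin N) = ⟨j', by omega⟩ :=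
      hf.injective (Fin.ext (by simp only [r, Fin.mk.injEq] at h; omega))
    simpa [Fin.ext_iff] using this
  obtain ⟨j, hj⟩ := hr ⟨i - n, by omega⟩
  have h1 := hf.le_apply_of_lt ⟨j, by omega⟩ j.2
  have : f ⟨j, by omega⟩ = i := Fin.ext (by simp only [r, Fin.mk.injEq] at hj; omega)
  rw [← this, hf.apply_apply]
  exact j.2

theorem val_apply_of_le {f : Fin (M + 2) → Fin (M + 2)} (hf : IsAdmissible n f)
    (h : n ≤ (f (Fin.last _) : ℕ)) {i : Fin (M + 2)} (hi : M ≤ (i : ℕ)) :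
    (f i : ℕ) = 2 * M + 1 - i := by
  have hlast := hf.val_apply_last_of_le h
  rcases (show (i : ℕ) = M ∨ i = Fin.last _ by rw [Fin.ext_iff, Fin.val_last]; omega)
    with hiM | rfl
  · have : i = f (Fin.last _) := Fin.ext (by omega)
    rw [this, hf.apply_apply, Fin.val_last]
    omega
  · rw [hlast, Fin.val_last]
    omega

theorem val_apply_lt_of_lt {f : Fin (M + 2) → Fin (M + 2)} (hf : IsAdmissible n f)
    (h : n ≤ (f (Fin.last _) : ℕ)) {i : Fin (M + 2)} (hi : (i : ℕ) < M) : (f i : ℕ) < M := by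
  by_contra! hfi
  have := hf.val_apply_of_le h hfi
  rw [hf.apply_apply] at this
  omega

theorem val_apply_of_notMem_Ioc {f : Fin (M + 2) → Fin (M + 2)} (hf : IsAdmissible (n + 1) f)
    (h : (f (Fin.last _) : ℕ) < n + 1) {i : Fin (M + 2)} (hi : (i : ℕ) ∉ Set.Ioc 0 M) :
    (f i : ℕ) = M + 1 - i := by
  have hlast := hf.apply_last_eq_zero h
  have h0 : f 0 = Fin.last _ := by rw [← hlast, hf.apply_apply]
  rw [Set.mem_Ioc] at hi
  rcases (show i = 0 ∨ i = Fin.last _ by simp only [Fin.ext_iff, Fin.val_zero, Fin.val_last]; omega)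
    with rfl | rfl
  · simp [h0]
  · simp [hlast]

theorem val_apply_mem_Ioc {f : Fin (M + 2) → Fin (M + 2)} (hf : IsAdmissible (n + 1) f)
    (h : (f (Fin.last _) : ℕ) < n + 1) {i : Fin (M + 2)} (hi : (i : ℕ) ∈ Set.Ioc 0 M) :
    (f i : ℕ) ∈ Set.Ioc 0 M := by
  by_contra hfi
  have := hf.val_apply_of_notMem_Ioc h hfi
  rw [hf.apply_apply] at this
  rw [Set.mem_Ioc] at hi hfi
  omega

end IsAdmissible

section Recursion

variable {n M : ℕ}

def addDomino (g : Fin M → Fin M) (i : Fin (M + 2)) : Fin (M + 2) :=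
  if h : (i : ℕ) < M then (g ⟨i, h⟩).castLE (by omega) else ⟨2 * M + 1 - i, by omega⟩

theorem addDomino_castLE (g : Fin M → Fin M) (i : Fin M) :
    addDomino g (i.castLE (by omega)) = (g i).castLE (by omega) := by
  simp [addDomino]

theorem val_addDomino_of_le (g : Fin M → Fin M) {i : Fin (M + 2)} (hi : M ≤ (i : ℕ)) :
    (addDomino g i : ℕ) = 2 * M + 1 - i := by
  simp [addDomino, hi.not_gt]

theorem isAdmissible_addDomino {g : Fin M → Fin M} (hg : IsAdmissible n g) (hn : n ≤ M) :
    IsAdmissible n (addDomino g) := by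
  have key : ∀ i : Fin (M + 2),
      (∃ j, j.castLE (by omega) = i ∧ addDomino g i = (g j).castLE (by omega)) ∨
      (M ≤ (i : ℕ) ∧ (addDomino g i : ℕ) = 2 * M + 1 - i) := by
    intro i
    by_cases hi : (i : ℕ) < M
    · exact .inl ⟨⟨i, hi⟩, rfl, addDomino_castLE g ⟨i, hi⟩⟩
    · exact .inr ⟨not_lt.1 hi, val_addDomino_of_le g (not_lt.1 hi)⟩
  refine ⟨⟨fun i => ?_, fun i => ?_, fun i j hij hji hgg => ?_⟩, fun i hi => ?_,
    fun i j hi hij hj hji => ?_⟩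
  · rcases key i with ⟨i, rfl, h⟩ | ⟨hi, h⟩
    · rw [h, addDomino_castLE, hg.apply_apply]
    · ext; rw [val_addDomino_of_le g (by omega), h]; omega
  · rcases key i with ⟨i, rfl, h⟩ | ⟨hi, h⟩
    · rw [h]; exact (Fin.castLE_injective _).ne (hg.apply_ne i)
    · exact Fin.ne_of_val_ne (by omega)
  · rw [Fin.lt_def] at hij hji hgg
    rcases key i with ⟨i, rfl, hi⟩ | ⟨hi, hi'⟩ <;> rcases key j with ⟨j, rfl, hj⟩ | ⟨hj, hj'⟩
    · rw [hi] at hji hgg; rw [hj] at hgg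
      exact hg.noncrossing i j hij hji hgg
    · rw [hi, Fin.val_castLE] at hji; omega
    · rw [Fin.val_castLE] at hij; omega
    · omega
  · rcases key i with ⟨i, rfl, h⟩ | ⟨hi', h⟩
    · rw [h]; exact hg.le_apply_of_lt i hi
    · omega
  · rw [Fin.lt_def] at hij hj hji
    rcases key i with ⟨i, rfl, hi'⟩ | ⟨hi', hi''⟩ <;>
      rcases key j with ⟨j, rfl, hj'⟩ | ⟨hj', hj''⟩
    · rw [hi'] at hji; rw [hj'] at hj hji
      exact hg.not_nested i j hi hij hj hji
    · rw [hi', Fin.val_castLE] at hji; omega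
    · rw [Fin.val_castLE] at hij; omega
    · omega

def addOuterArc (g : Fin M → Fin M) (i : Fin (M + 2)) : Fin (M + 2) :=
  if h : 0 < (i : ℕ) ∧ (i : ℕ) ≤ M then (g ⟨i - 1, by omega⟩).castSucc.succ else i.rev

theorem addOuterArc_castSucc_succ (g : Fin M → Fin M) (i : Fin M) :
    addOuterArc g i.castSucc.succ = (g i).castSucc.succ := by
  simp [addOuterArc]

theorem val_addOuterArc_of_notMem_Ioc (g : Fin M → Fin M) {i : Fin (M + 2)}
    (hi : (i : ℕ) ∉ Set.Ioc 0 M) : (addOuterArc g i : ℕ) = M + 1 - i := by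
  rw [Set.mem_Ioc] at hi
  simp only [addOuterArc, hi, dite_false, Fin.val_rev]
  omega

theorem Fin.exists_castSucc_succ_eq {i : Fin (M + 2)} (hi : (i : ℕ) ∈ Set.Ioc 0 M) :
    ∃ j : Fin M, j.castSucc.succ = i :=
  ⟨⟨i - 1, by rw [Set.mem_Ioc] at hi; omega⟩,
    Fin.ext (by rw [Set.mem_Ioc] at hi; simp only [Fin.val_succ, Fin.val_castSucc]; omega)⟩

theorem isAdmissible_addOuterArc {g : Fin M → Fin M} (hg : IsAdmissible n g) (hn : n ≤ M) :
    IsAdmissible (n + 1) (addOuterArc g) := by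
  have key : ∀ i : Fin (M + 2),
      (∃ j : Fin M, j.castSucc.succ = i ∧ addOuterArc g i = (g j).castSucc.succ) ∨
      (¬ (0 < (i : ℕ) ∧ (i : ℕ) ≤ M) ∧ (addOuterArc g i : ℕ) = M + 1 - i) := by
    intro i
    by_cases hi : (i : ℕ) ∈ Set.Ioc 0 M
    · obtain ⟨j, rfl⟩ := Fin.exists_castSucc_succ_eq hi
      exact .inl ⟨j, rfl, addOuterArc_castSucc_succ g j⟩
    · exact .inr ⟨hi, val_addOuterArc_of_notMem_Ioc g hi⟩
  refine ⟨⟨fun i => ?_, fun i => ?_, fun i j hij hji hgg => ?_⟩, fun i hi => ?_,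
    fun i j hi hij hj hji => ?_⟩
  · rcases key i with ⟨i, rfl, h⟩ | ⟨hi, h⟩
    · rw [h, addOuterArc_castSucc_succ, hg.apply_apply]
    · ext; rw [val_addOuterArc_of_notMem_Ioc g (by rw [Set.mem_Ioc]; omega), h]; omega
  · rcases key i with ⟨i, rfl, h⟩ | ⟨hi, h⟩
    · rw [h]; exact (Fin.succ_injective _).ne ((Fin.castSucc_injective _).ne (hg.apply_ne i))
    · exact Fin.ne_of_val_ne (by omega)
  · rw [Fin.lt_def] at hij hji hgg
    rcases key i with ⟨i, rfl, hi⟩ | ⟨hi, hi'⟩ <;> rcases key j with ⟨j, rfl, hj⟩ | ⟨hj, hj'⟩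
    · rw [hi] at hji hgg; rw [hj] at hgg
      simp only [Fin.val_succ, Fin.val_castSucc] at hij hji hgg
      exact hg.noncrossing i j (by rw [Fin.lt_def]; omega) (by rw [Fin.lt_def]; omega)
        (by rw [Fin.lt_def]; omega)
    · rw [hi] at hji; simp only [Fin.val_succ, Fin.val_castSucc] at hji hij; omega
    · rw [hj] at hgg; simp only [Fin.val_succ, Fin.val_castSucc] at hgg hij; omega
    · omega
  · rcases key i with ⟨i, rfl, h⟩ | ⟨hi', h⟩
    · rw [h]
      simp only [Fin.val_succ, Fin.val_castSucc] at hi ⊢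
      exact Nat.succ_le_succ (hg.le_apply_of_lt i (by omega))
    · omega
  · rw [Fin.lt_def] at hij hj hji
    rcases key i with ⟨i, rfl, hi'⟩ | ⟨hi', hi''⟩ <;>
      rcases key j with ⟨j, rfl, hj'⟩ | ⟨hj', hj''⟩
    · rw [hi'] at hji; rw [hj'] at hj hji
      simp only [Fin.val_succ, Fin.val_castSucc] at hi hij hj hji
      exact hg.not_nested i j (by omega) (by rw [Fin.lt_def]; omega) (by rw [Fin.lt_def]; omega)
        (by rw [Fin.lt_def]; omega)
    · rw [hi'] at hji; simp only [Fin.val_succ, Fin.val_castSucc] at hji hij; omega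
    · simp only [Fin.val_succ, Fin.val_castSucc] at hij; omega
    · omega

theorem card_admissible_add_two (n M : ℕ) :
    Nat.card {f : Fin (M + 2) → Fin (M + 2) // IsAdmissible n f} =
      Nat.card {f : Fin (M + 2) → Fin (M + 2) // IsAdmissible n f ∧ n ≤ (f (Fin.last _) : ℕ)} +
      Nat.card {f : Fin (M + 2) → Fin (M + 2) // IsAdmissible n f ∧ (f (Fin.last _) : ℕ) < n} := by
  rw [← Nat.card_sum]
  exact Nat.card_congr
    ((Equiv.sumCompl fun f : {f // IsAdmissible n f} => n ≤ (f.1 (Fin.last _) : ℕ)).symm.trans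
      (Equiv.sumCongr
        (Equiv.subtypeSubtypeEquivSubtypeInter (fun f => IsAdmissible n f)
          fun f => n ≤ (f (Fin.last _) : ℕ))
        ((Equiv.subtypeSubtypeEquivSubtypeInter (fun f => IsAdmissible n f)
          fun f => ¬ n ≤ (f (Fin.last _) : ℕ)).trans
          (Equiv.subtypeEquivRight fun _ => and_congr_right fun _ => not_le))))

theorem card_admissible_of_le_apply_last (hn : n ≤ M) :
    Nat.card {f : Fin (M + 2) → Fin (M + 2) // IsAdmissible n f ∧ n ≤ (f (Fin.last _) : ℕ)} =
      Nat.card {g : Fin M → Fin M // IsAdmissible n g} :=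
  Nat.card_congr
  { toFun f :=
      let g : Fin M → Fin M := fun i =>
        ⟨f.1 (i.castLE (by omega)), f.2.1.val_apply_lt_of_lt f.2.2 i.2⟩
      ⟨g, f.2.1.comap (Fin.strictMono_castLE (by omega : M ≤ M + 2)) (fun _ => Iff.rfl) (g := g)
        fun _ => rfl⟩
    invFun g := ⟨addDomino g.1, isAdmissible_addDomino g.2 hn, by
      rw [val_addDomino_of_le _ (by rw [Fin.val_last]; omega), Fin.val_last]; omega⟩
    left_inv f := by
      ext i : 2
      dsimp only
      by_cases hi : (i : ℕ) < M
      · exact addDomino_castLE _ ⟨i, hi⟩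
      · ext
        rw [val_addDomino_of_le _ (not_lt.1 hi), f.2.1.val_apply_of_le f.2.2 (not_lt.1 hi)]
    right_inv g := by
      ext i : 2
      dsimp only
      simp only [addDomino_castLE, Fin.val_castLE, Fin.eta] }

theorem card_admissible_of_apply_last_lt (hn : n ≤ M) :
    Nat.card {f : Fin (M + 2) → Fin (M + 2) //
        IsAdmissible (n + 1) f ∧ (f (Fin.last _) : ℕ) < n + 1} =
      Nat.card {g : Fin M → Fin M // IsAdmissible n g} :=
  have hmem (i : Fin M) : ((i.castSucc.succ : Fin (M + 2)) : ℕ) ∈ Set.Ioc 0 M := by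
    rw [Set.mem_Ioc, Fin.val_succ, Fin.val_castSucc]; omega
  Nat.card_congr
  { toFun f :=
      let g : Fin M → Fin M := fun i => ⟨f.1 i.castSucc.succ - 1, by
        have := f.2.1.val_apply_mem_Ioc f.2.2 (hmem i); rw [Set.mem_Ioc] at this; omega⟩
      ⟨g, f.2.1.comap (Fin.strictMono_succ.comp Fin.strictMono_castSucc)
        (fun _ => by simp) (g := g) fun i => Fin.ext (by
          have := f.2.1.val_apply_mem_Ioc f.2.2 (hmem i)
          rw [Set.mem_Ioc] at this
          simp only [g, Function.comp_apply, Fin.val_succ, Fin.val_castSucc]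
          omega)⟩
    invFun g := ⟨addOuterArc g.1, isAdmissible_addOuterArc g.2 hn, by
      rw [val_addOuterArc_of_notMem_Ioc _ (by simp)]; simp⟩
    left_inv f := by
      ext i : 2
      dsimp only
      by_cases hi : (i : ℕ) ∈ Set.Ioc 0 M
      · obtain ⟨i, rfl⟩ := Fin.exists_castSucc_succ_eq hi
        have := f.2.1.val_apply_mem_Ioc f.2.2 hi
        rw [Set.mem_Ioc] at this
        rw [addOuterArc_castSucc_succ]
        ext
        simp only [Fin.val_succ, Fin.val_castSucc]
        omega
      · ext
        rw [val_addOuterArc_of_notMem_Ioc _ hi, f.2.1.val_apply_of_notMem_Ioc f.2.2 hi]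
    right_inv g := by
      ext i : 2
      simp [addOuterArc_castSucc_succ] }

end Recursion

theorem card_admissible {n k N : ℕ} (hN : N = n + (n + 2 * k)) :
    Nat.card {f : Fin N → Fin N // IsAdmissible n f} = (n + k).choose k := by
  induction n generalizing k N with
  | zero =>
    induction k generalizing N with
    | zero =>
      subst hN
      have : Nonempty {f : Fin 0 → Fin 0 // IsAdmissible 0 f} :=
        ⟨⟨finZeroElim, ⟨finZeroElim, finZeroElim, finZeroElim⟩, finZeroElim, finZeroElim⟩⟩
      simp
    | succ k ih =>
      obtain ⟨M, rfl⟩ : ∃ M, N = M + 2 := ⟨2 * k, by omega⟩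
      have : IsEmpty {f : Fin (M + 2) → Fin (M + 2) //
          IsAdmissible 0 f ∧ (f (Fin.last _) : ℕ) < 0} :=
        ⟨fun f => Nat.not_lt_zero _ f.2.2⟩
      rw [card_admissible_add_two, card_admissible_of_le_apply_last (Nat.zero_le _),
        ih (by omega), Nat.card_of_isEmpty]
      simp
  | succ n ihn =>
    induction k generalizing N with
    | zero =>
      obtain ⟨M, rfl⟩ : ∃ M, N = M + 2 := ⟨2 * n, by omega⟩
      have : IsEmpty {f : Fin (M + 2) → Fin (M + 2) //
          IsAdmissible (n + 1) f ∧ n + 1 ≤ (f (Fin.last _) : ℕ)} :=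
        ⟨fun f => (f.2.1.val_apply_lt_of_le (by omega) (by rw [Fin.val_last]; omega)).not_ge f.2.2⟩
      rw [card_admissible_add_two, Nat.card_of_isEmpty,
        card_admissible_of_apply_last_lt (by omega), ihn (k := 0) (by omega)]
      simp
    | succ k ihk =>
      obtain ⟨M, rfl⟩ : ∃ M, N = M + 2 := ⟨2 * n + 2 * k + 2, by omega⟩
      rw [card_admissible_add_two, card_admissible_of_le_apply_last (by omega),
        ihk (N := M) (by omega), card_admissible_of_apply_last_lt (by omega),
        ihn (N := M) (k := k + 1) (by omega), show n + 1 + (k + 1) = n + 1 + k + 1 by ring,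
        Nat.choose_succ_succ, show n + (k + 1) = n + 1 + k by ring]

/-- The number of crossingless matchings between `n` left points and `n + 2k`
right points with no left returns and only unnested right returns is `C(n+k, k)`.
(A right return is an arc joining two right points, i.e. two indices `≥ n`;
unnested means no right return lies strictly between the endpoints of another.) -/
theorem card_no_left_unnested_right (n k : ℕ) :
    Fintype.card {d : NCM (n + (n + 2 * k)) //
        (∀ i : Fin (n + (n + 2 * k)), (i : ℕ) < n → n ≤ ((d.1 i : ℕ))) ∧
        (∀ i j : Fin (n + (n + 2 * k)),
          n ≤ (i : ℕ) → n ≤ ((d.1 i : ℕ)) → n ≤ (j : ℕ) → n ≤ ((d.1 j : ℕ)) →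
          i < d.1 i → j < d.1 j → i < j → d.1 j < d.1 i → False)} =
      Nat.choose (n + k) k := by
  rw [Fintype.card_eq_nat_card, ← card_admissible rfl]
  exact Nat.card_congr
    { toFun d := ⟨d.1.1, ⟨d.1.2.1, d.1.2.2.1, d.1.2.2.2⟩, d.2.1, fun i j hi hij hj hji =>
        d.2.2 i j hi (by rw [Fin.lt_def] at *; omega) (by rw [Fin.lt_def] at *; omega)
          (by rw [Fin.lt_def] at *; omega) (by rw [Fin.lt_def] at *; omega) hj hij hji⟩
      invFun f := ⟨⟨f.1, f.2.apply_apply, f.2.apply_ne, f.2.noncrossing⟩, f.2.le_apply_of_lt,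
        fun i j hi _ _ _ _ hj hij hji => f.2.not_nested i j hi hij hj hji⟩
      left_inv _ := rfl
      right_inv _ := rfl }
end

section
/- Let X and Y be the ℕ×ℕ upper-triangular matrices with entries X_{n,n+2k} = ((n+1)/(n+k+1))·C(n+2k, k) and Y_{n,n+2k} = (−1)^k·C(n+k, k) for n, k ≥ 0, and all other entries zero. Then X and Y are mutually inverse: for all n, m, Σ_j X_{n,j}·Y_{j,m} = δ_{n,m} and Σ_j Y_{n,j}·X_{j,m} = δ_{n,m} (the sums are finite since X and Y are supported on j ≥ n of the same parity as n, and ≤ m). -/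
/-!
Writing `c_i = (-1)^i C(n+i, i) = C(-(n+1), i)` and `X_{p,p+2j} = C(N, j) - C(N, j-1)` with
`N = p + 2j` (the ballot-number formula), the entry `(Y X)_{n,n+2K}` becomes, by Chu–Vandermonde,
`C(N-n-1, K) - C(N-n-1, K-1) = C(2K-1, K) - C(2K-1, K-1)`, which vanishes for `K ≥ 1` by symmetry.
Both matrices are upper triangular, so their truncations to `{0, …, m}` are square matrices
with `Y X = 1`; hence also `X Y = 1`.
-/

open Finset

/-- The matrix `X` with `X_{n,n+2k} = ((n+1)/(n+k+1))·C(n+2k,k)` (a ballot number,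
always an integer) and all other entries zero. -/
def Xmat (n m : ℕ) : ℤ :=
  if n ≤ m ∧ (m - n) % 2 = 0 then
    (((n + 1) * Nat.choose m ((m - n) / 2) / (n + (m - n) / 2 + 1) : ℕ) : ℤ)
  else 0

/-- The matrix `Y` with `Y_{n,n+2k} = (-1)^k·C(n+k,k)` and all other entries zero. -/
def Ymat (n m : ℕ) : ℤ :=
  if n ≤ m ∧ (m - n) % 2 = 0 then
    (-1) ^ ((m - n) / 2) * ((Nat.choose (n + (m - n) / 2) ((m - n) / 2) : ℕ) : ℤ)
  else 0

theorem succ_mul_choose_div_eq_choose_sub_choose (q k : ℕ) :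
    (q + 1) * (q + 2 * (k + 1)).choose (k + 1) / (q + (k + 1) + 1)
      = (q + 2 * (k + 1)).choose (k + 1) - (q + 2 * (k + 1)).choose k := by
  set N := q + 2 * (k + 1)
  have hle : N.choose k ≤ N.choose (k + 1) := Nat.choose_le_succ_of_lt_half_left (by omega)
  have hrec : N.choose (k + 1) * (k + 1) = N.choose k * (q + k + 2) := by
    rw [Nat.choose_succ_right_eq]; congr 1; omega
  obtain ⟨d, hd⟩ := Nat.exists_eq_add_of_le hle
  refine Nat.div_eq_of_eq_mul_left (by omega) ?_
  rw [hd] at hrec ⊢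
  rw [Nat.add_sub_cancel_left]
  linarith

theorem sum_range_mul_eq_ite_of_left_inverse {R : Type*} [CommRing R] {A B : ℕ → ℕ → R}
    (hB : ∀ i j, j < i → B i j = 0)
    (hAB : ∀ i j, ∑ k ∈ range (j + 1), A i k * B k j = if i = j then 1 else 0) (n m : ℕ) :
    ∑ k ∈ range (m + 1), B n k * A k m = if n = m then 1 else 0 := by
  rcases lt_or_ge m n with hmn | hnm
  · rw [if_neg hmn.ne']
    exact sum_eq_zero fun k hk => by rw [hB n k (by grind), zero_mul]
  let A' : Matrix (Fin (m + 1)) (Fin (m + 1)) R := .of fun i j => A i j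
  let B' : Matrix (Fin (m + 1)) (Fin (m + 1)) R := .of fun i j => B i j
  have hA'B' : A' * B' = 1 := by
    ext i j
    have hj : (j : ℕ) + 1 ≤ m + 1 := j.is_lt
    simp only [A', B', Matrix.mul_apply, Matrix.of_apply, Matrix.one_apply]
    rw [Fin.sum_univ_eq_sum_range (fun k => A i k * B k j),
      ← sum_subset (range_subset_range.2 hj) fun k _ hk => by
        rw [hB k j (by grind), mul_zero], hAB]
    exact if_congr Fin.val_inj rfl rfl
  let n' : Fin (m + 1) := ⟨n, by omega⟩
  let m' : Fin (m + 1) := ⟨m, by omega⟩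
  have hB'A' : (B' * A') n' m' = (1 : Matrix _ _ R) n' m' := by
    rw [mul_eq_one_comm.mp hA'B']
  simpa only [A', B', n', m', Matrix.mul_apply, Matrix.of_apply, Matrix.one_apply, Fin.mk.injEq,
    Fin.sum_univ_eq_sum_range (fun k => B n k * A k m)] using hB'A'

theorem sum_range_eq_sum_antidiagonal_of_support {M : Type*} [AddCommMonoid M] {g : ℕ → M}
    {n : ℕ} (hg : ∀ j, g j ≠ 0 → ∃ i, j = n + 2 * i) (K : ℕ) :
    ∑ j ∈ range (n + 2 * K + 1), g j = ∑ p ∈ antidiagonal K, g (n + 2 * p.1) := by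
  let e : ℕ ↪ ℕ := ⟨fun i => n + 2 * i, fun a b h => by simpa using h⟩
  rw [Nat.sum_antidiagonal_eq_sum_range_succ (fun i _ => g (n + 2 * i))]
  refine (sum_subset (fun j hj => ?_) fun j hj hj' => ?_).symm.trans (sum_map _ e g)
  · obtain ⟨i, hi, rfl⟩ := mem_map.1 hj
    simp only [mem_range] at hi ⊢
    exact show n + 2 * i < n + 2 * K + 1 by omega
  · by_contra hgj
    obtain ⟨i, rfl⟩ := hg j hgj
    exact hj' (mem_map.2 ⟨i, by grind, rfl⟩)

theorem exists_eq_add_two_mul_of_Xmat_ne_zero {n m : ℕ} (h : Xmat n m ≠ 0) :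
    ∃ k, m = n + 2 * k := by
  unfold Xmat at h
  split_ifs at h
  · exact ⟨(m - n) / 2, by omega⟩
  · exact absurd rfl h

theorem exists_eq_add_two_mul_of_Ymat_ne_zero {n m : ℕ} (h : Ymat n m ≠ 0) :
    ∃ k, m = n + 2 * k := by
  unfold Ymat at h
  split_ifs at h
  · exact ⟨(m - n) / 2, by omega⟩
  · exact absurd rfl h

theorem Xmat_eq_zero_of_lt {n m : ℕ} (h : m < n) : Xmat n m = 0 := by
  by_contra hX
  obtain ⟨k, rfl⟩ := exists_eq_add_two_mul_of_Xmat_ne_zero hX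
  omega

theorem Ymat_add_two_mul (n i : ℕ) : Ymat n (n + 2 * i) = Ring.choose (-(n + 1 : ℤ)) i := by
  rw [Ymat, if_pos ⟨by omega, by omega⟩, Ring.choose_neg, Units.smul_def,
    Int.coe_negOnePow_natCast, smul_eq_mul, show n + 2 * i - n = 2 * i by omega,
    Nat.mul_div_cancel_left i two_pos, ← Ring.choose_natCast]
  push_cast
  ring_nf

theorem Xmat_self (n : ℕ) : Xmat n n = 1 := by
  simp [Xmat, Nat.div_self (Nat.succ_pos n)]

theorem Xmat_of_eq_add_two_mul_succ {n m k : ℕ} (h : m = n + 2 * (k + 1)) :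
    Xmat n m = (m.choose (k + 1) : ℤ) - m.choose k := by
  subst h
  rw [Xmat, if_pos ⟨by omega, by omega⟩, show n + 2 * (k + 1) - n = 2 * (k + 1) by omega,
    Nat.mul_div_cancel_left _ two_pos, succ_mul_choose_div_eq_choose_sub_choose,
    Nat.cast_sub (Nat.choose_le_succ_of_lt_half_left (by omega))]

theorem sum_antidiagonal_choose_neg_mul_Xmat (n L : ℕ) :
    ∑ p ∈ antidiagonal (L + 1),
      Ring.choose (-(n + 1 : ℤ)) p.1 * Xmat (n + 2 * p.1) (n + 2 * (L + 1)) = 0 := by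
  set N := n + 2 * (L + 1)
  set c : ℕ → ℤ := Ring.choose (-(n + 1 : ℤ))
  have vandermonde (K : ℕ) :
      ∑ p ∈ antidiagonal K, c p.1 * N.choose p.2 = (2 * L + 1).choose K := by
    have hN : -(n + 1 : ℤ) + N = (2 * L + 1 : ℕ) := by push_cast [N]; ring
    rw [← Ring.choose_natCast, ← hN, Ring.add_choose_eq K (Commute.all _ _)]
    simp only [Ring.choose_natCast, c]
  calc ∑ p ∈ antidiagonal (L + 1), c p.1 * Xmat (n + 2 * p.1) N
      = c (L + 1) + ∑ p ∈ antidiagonal L, c p.1 * ((N.choose (p.2 + 1) : ℤ) - N.choose p.2) := by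
        rw [Nat.sum_antidiagonal_succ', Xmat_self, mul_one]
        congr 1
        refine sum_congr rfl fun p hp => ?_
        rw [Xmat_of_eq_add_two_mul_succ (k := p.2)
          (by have := HasAntidiagonal.mem_antidiagonal.1 hp; omega)]
    _ = ∑ p ∈ antidiagonal (L + 1), c p.1 * N.choose p.2
          - ∑ p ∈ antidiagonal L, c p.1 * N.choose p.2 := by
        simp only [Nat.sum_antidiagonal_succ', mul_sub, sum_sub_distrib, Nat.choose_zero_right,
          Nat.cast_one, mul_one]
        ring
    _ = 0 := by rw [vandermonde, vandermonde, Nat.choose_symm_half, sub_self]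

theorem sum_Ymat_mul_Xmat (n m : ℕ) :
    ∑ j ∈ range (m + 1), Ymat n j * Xmat j m = if n = m then 1 else 0 := by
  by_cases hm : ∃ K, m = n + 2 * K
  · obtain ⟨K, rfl⟩ := hm
    rw [sum_range_eq_sum_antidiagonal_of_support
      (fun j hj => exists_eq_add_two_mul_of_Ymat_ne_zero (left_ne_zero_of_mul hj))]
    simp only [Ymat_add_two_mul]
    cases K with
    | zero => simp [Xmat_self]
    | succ L => rw [sum_antidiagonal_choose_neg_mul_Xmat, if_neg (by omega)]
  · rw [if_neg fun h => hm ⟨0, by omega⟩]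
    refine sum_eq_zero fun j _ => ?_
    by_contra hj
    obtain ⟨i, rfl⟩ := exists_eq_add_two_mul_of_Ymat_ne_zero (left_ne_zero_of_mul hj)
    obtain ⟨k, rfl⟩ := exists_eq_add_two_mul_of_Xmat_ne_zero (right_ne_zero_of_mul hj)
    exact hm ⟨i + k, by ring⟩

/-- `X` and `Y` are mutually inverse: `Σ_j X_{n,j} Y_{j,m} = δ_{n,m}` and
`Σ_j Y_{n,j} X_{j,m} = δ_{n,m}` (the sums are supported on `n ≤ j ≤ m`). -/
theorem Xmat_Ymat_inverse (n m : ℕ) :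
    (∑ j ∈ Finset.range (m + 1), Xmat n j * Ymat j m = if n = m then 1 else 0) ∧
    (∑ j ∈ Finset.range (m + 1), Ymat n j * Xmat j m = if n = m then 1 else 0) :=
  ⟨sum_range_mul_eq_ite_of_left_inverse (fun _ _ => Xmat_eq_zero_of_lt) sum_Ymat_mul_Xmat n m,
    sum_Ymat_mul_Xmat n m⟩
end

section
/- For all n, k with 0 ≤ k ≤ ⌊n/2⌋, the identity x^n = Σ_{k=0}^{⌊n/2⌋} X_{n−2k,n} · U_{n−2k}(x) holds in ℤ[x], where X_{m,n} = ((m+1)·2/(n+m+2))·C(n, (n−m)/2); explicitly x^n = Σ_{k=0}^{⌊n/2⌋} ((n−2k+1)/(n−k+1))·C(n,k)·U_{n−2k}(x). -/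
/-!
Substituting `x = t + t⁻¹` turns `U_m` into `(t^(m+1) - t^(-m-1)) / (t - t⁻¹)`, so the binomial
expansion of `(t + t⁻¹)^n` reads `x^n = ∑_{k ≤ n} C(n,k) U_{n-2k}`, once `U` is extended to
negative indices by `U_{-m-2} = -U_m` (Mathlib's `Chebyshev.S`). Reflecting `k ↦ n + 1 - k` folds
the terms with negative index onto the others, leaving the ballot numbers
`C(n,k) - C(n,k-1) = (n-2k+1)/(n-k+1) · C(n,k)` as coefficients.
-/

noncomputable def U : ℕ → Polynomial ℤ
  | 0 => 1
  | 1 => Polynomial.X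
  | (n + 2) => Polynomial.X * U (n + 1) - U n

open Polynomial Finset

theorem U_eq_S : ∀ n : ℕ, U n = Chebyshev.S ℤ n
  | 0 => by simp [U]
  | 1 => by simp [U]
  | n + 2 => by
    rw [U, U_eq_S (n + 1), U_eq_S n]
    push_cast
    exact (Chebyshev.S_add_two ℤ n).symm

namespace Polynomial.Chebyshev

variable (R : Type*) [CommRing R]

theorem X_mul_S (m : ℤ) : X * S R m = S R (m + 1) + S R (m - 1) := by
  linear_combination -S_add_one R m

theorem X_pow_eq_sum_choose_mul_S (n : ℕ) :
    (X : R[X]) ^ n = ∑ k ∈ range (n + 1), (n.choose k : R[X]) * S R (n - 2 * k) := by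
  induction n with
  | zero => simp
  | succ n ih =>
    have pascal : ∑ k ∈ range (n + 2), ((n + 1).choose k : R[X]) * S R (↑(n + 1) - 2 * k) =
        ∑ k ∈ range (n + 2), (n.choose k : R[X]) * S R (n + 1 - 2 * k) +
          ∑ k ∈ range (n + 1), (n.choose k : R[X]) * S R (n - 1 - 2 * k) := by
      rw [sum_range_succ', sum_range_succ' (fun k => (n.choose k : R[X]) * _)]
      simp only [Nat.choose_succ_succ, Nat.choose_zero_right, Nat.cast_add, add_mul,
        Nat.succ_eq_add_one, sum_add_distrib]
      push_cast
      ring_nf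
    rw [pascal, sum_range_succ, Nat.choose_succ_self, Nat.cast_zero, zero_mul, add_zero,
      ← sum_add_distrib, pow_succ', ih, mul_sum]
    refine sum_congr rfl fun k _ => ?_
    rw [mul_left_comm, X_mul_S, mul_add]
    ring_nf

theorem sum_choose_mul_S_upper_half (n : ℕ) :
    ∑ k ∈ range (n - n / 2),
        (n.choose (n / 2 + 1 + k) : R[X]) * S R (n - 2 * ↑(n / 2 + 1 + k)) =
      -∑ k ∈ range (n / 2), (n.choose k : R[X]) * S R (n - 2 * ↑(k + 1)) := by
  have reflect : ∀ k ∈ range (n - n / 2),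
      (n.choose (n / 2 + 1 + (n - n / 2 - 1 - k)) : R[X]) *
        S R (n - 2 * ↑(n / 2 + 1 + (n - n / 2 - 1 - k))) =
      -((n.choose k : R[X]) * S R (n - 2 * ↑(k + 1))) := by
    intro k hk
    have hk : k < n - n / 2 := mem_range.mp hk
    have hidx : n / 2 + 1 + (n - n / 2 - 1 - k) = n - k := by omega
    rw [hidx, Nat.choose_symm (by omega), Nat.cast_sub (by omega), ← mul_neg, ← S_neg_sub_two]
    push_cast
    ring_nf
  rw [← sum_range_reflect, sum_congr rfl reflect, sum_neg_distrib]
  rcases Nat.even_or_odd n with ⟨m, rfl⟩ | ⟨m, rfl⟩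
  · rw [show m + m - (m + m) / 2 = (m + m) / 2 by omega]
  · rw [show 2 * m + 1 - (2 * m + 1) / 2 = (2 * m + 1) / 2 + 1 by omega, sum_range_succ,
      show (2 * m + 1) / 2 = m by omega]
    have hlast : ((2 * m + 1 : ℕ) : ℤ) - 2 * ↑(m + 1) = -1 := by push_cast; ring
    rw [hlast, S_neg_one, mul_zero, add_zero]

theorem X_pow_eq_S_add_sum_sub_choose_mul_S (n : ℕ) :
    (X : R[X]) ^ n = S R n + ∑ k ∈ range (n / 2),
      ((n.choose (k + 1) : R[X]) - n.choose k) * S R (n - 2 * ↑(k + 1)) := by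
  rw [X_pow_eq_sum_choose_mul_S, show n + 1 = n / 2 + 1 + (n - n / 2) by omega, sum_range_add,
    sum_choose_mul_S_upper_half, sum_range_succ', ← sub_eq_add_neg, add_sub_right_comm,
    ← sum_sub_distrib]
  simp only [sub_mul, Nat.choose_zero_right, Nat.cast_one, one_mul, CharP.cast_eq_zero, mul_zero,
    sub_zero]
  ring

end Polynomial.Chebyshev

theorem Nat.mul_choose_succ_div_eq_choose_succ_sub_choose (n k : ℕ) (hk : 2 * (k + 1) ≤ n) :
    (n - 2 * (k + 1) + 1) * n.choose (k + 1) / (n - (k + 1) + 1) =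
      n.choose (k + 1) - n.choose k := by
  have hmono : n.choose k ≤ n.choose (k + 1) := Nat.choose_le_succ_of_lt_half_left (by omega)
  have hsucc : n.choose (k + 1) * (k + 1) = n.choose k * (n - k) := Nat.choose_succ_right_eq n k
  have key : (n - 2 * (k + 1) + 1) * n.choose (k + 1) =
      (n - (k + 1) + 1) * (n.choose (k + 1) - n.choose k) := by
    zify [hmono, hk, show k + 1 ≤ n by omega, show k ≤ n by omega] at hsucc ⊢
    linear_combination -hsucc
  rw [key, Nat.mul_div_cancel_left _ (by omega)]

/-- `x^n = Σ_{k=0}^{⌊n/2⌋} ((n−2k+1)/(n−k+1))·C(n,k)·U_{n−2k}(x)` in `ℤ[x]`;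
the coefficients are the ballot numbers `X_{n-2k,n}` (integers). -/
theorem monomial_in_chebyshev_basis (n : ℕ) :
    (Polynomial.X : Polynomial ℤ) ^ n =
      ∑ k ∈ Finset.range (n / 2 + 1),
        (((n - 2 * k + 1) * Nat.choose n k / (n - k + 1) : ℕ) : Polynomial ℤ) *
          U (n - 2 * k) := by
  rw [Chebyshev.X_pow_eq_S_add_sum_sub_choose_mul_S, sum_range_succ', add_comm]
  congr 1
  · refine sum_congr rfl fun k hk => ?_
    have hk : 2 * (k + 1) ≤ n := by rw [mem_range] at hk; omega
    rw [Nat.mul_choose_succ_div_eq_choose_succ_sub_choose n k hk,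
      Nat.cast_sub (Nat.choose_le_succ_of_lt_half_left (by omega)), U_eq_S, Nat.cast_sub hk]
    push_cast
    rfl
  · simp [U_eq_S]
end

section
/- The binomial identity Σ over decompositions: for n ≥ 0 and m ≥ 1, Σ_{k=0}^{m} (−1)^k · C(n+k, k) · ((n+2k+1)/(n+k+m+1))·C(n+2m, m−k) = 0, while for m = 0 the sum equals 1. (This is the combinatorial content of YX = Id for the matrices of the previous statements.) -/
/-!
The ballot number `X_{b, b + 2p} = (b + 1) / (b + p + 1) · C(b + 2p, p)` equals
`C(b + 2p, p) - C(b + 2p, p - 1)`. With `N = n + 2m`, the sum therefore splits into two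
Chu–Vandermonde convolutions against `(-1)^k C(n + k, k) = C(-(n + 1), k)`, which evaluate to
`C(N - n - 1, m) = C(2m - 1, m)` and `C(2m - 1, m - 1)`; these agree, so their difference vanishes.
-/

open Finset

section BinomialRing

variable {R : Type*} [Ring R] [BinomialRing R]

theorem Ring.choose_neg_natCast_succ (n k : ℕ) :
    Ring.choose (-(n + 1 : R)) k = (-1) ^ k * (n + k).choose k := by
  rw [Ring.choose_neg, show (n + 1 : R) + k - 1 = ((n + k : ℕ) : R) by push_cast; abel,
    Ring.choose_natCast, Units.smul_def, Int.coe_negOnePow_natCast, zsmul_eq_mul]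
  push_cast
  rfl

theorem Ring.sum_range_neg_one_pow_mul_choose_mul_choose (n M j : ℕ) :
    ∑ k ∈ range (j + 1), (-1 : R) ^ k * (n + k).choose k * (n + 1 + M).choose (j - k) =
      M.choose j := by
  have h := Ring.add_choose_eq (r := -((n + 1 : ℕ) : R)) (s := ((n + 1 + M : ℕ) : R)) j
    (Nat.cast_commute _ _).symm.neg_left
  rw [show -((n + 1 : ℕ) : R) + ((n + 1 + M : ℕ) : R) = M by push_cast; abel,
    Ring.choose_natCast, Nat.sum_antidiagonal_eq_sum_range_succ_mk] at h
  rw [h]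
  refine sum_congr rfl fun k _ => ?_
  rw [Nat.cast_succ, Ring.choose_neg_natCast_succ, Ring.choose_natCast]

theorem Ring.sum_range_neg_one_pow_mul_choose_mul_choose_reflect (n j : ℕ) :
    ∑ k ∈ range (j + 2), (-1 : R) ^ k * (n + k).choose k *
        (n + 2 * (j + 1)).choose (n + k + (j + 1) + 1) = (2 * j + 1).choose j := by
  rw [sum_range_succ,
    Nat.choose_eq_zero_of_lt (show n + 2 * (j + 1) < n + (j + 1) + (j + 1) + 1 by omega),
    Nat.cast_zero, mul_zero, add_zero,
    ← Ring.sum_range_neg_one_pow_mul_choose_mul_choose n (2 * j + 1) j]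
  refine sum_congr rfl fun k hk => ?_
  have hk : k < j + 1 := mem_range.mp hk
  rw [show n + 1 + (2 * j + 1) = n + 2 * (j + 1) by ring,
    Nat.choose_symm_of_eq_add (show n + 2 * (j + 1) = n + k + (j + 1) + 1 + (j - k) by omega)]

end BinomialRing

theorem Nat.choose_add_succ_mul_eq (b p : ℕ) :
    (b + 2 * p).choose (b + p + 1) * (b + p + 1) = (b + 2 * p).choose p * p := by
  rw [Nat.choose_succ_right_eq, show b + 2 * p - (b + p) = p by omega,
    Nat.choose_symm_of_eq_add (show b + 2 * p = b + p + p by omega)]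

/-- `C(b + 2p, b + p + 1)` is `C(b + 2p, p - 1)` without the truncation at `p = 0`. -/
theorem Nat.ballot_eq_choose_sub_choose (b p : ℕ) :
    (((b + 1) * (b + 2 * p).choose p / (b + p + 1) : ℕ) : ℤ) =
      (b + 2 * p).choose p - (b + 2 * p).choose (b + p + 1) := by
  have hrec := congrArg (Nat.cast (R := ℤ)) (Nat.choose_add_succ_mul_eq b p)
  push_cast at hrec
  have hmul : ((b + 1) * (b + 2 * p).choose p : ℤ) =
      (b + p + 1) * ((b + 2 * p).choose p - (b + 2 * p).choose (b + p + 1)) := by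
    linear_combination hrec
  rw [Int.natCast_div]
  push_cast
  rw [hmul, Int.mul_ediv_cancel_left _ (by positivity)]

/-- The binomial identity expressing `YX = Id`: for `m ≥ 1`,
`Σ_{k=0}^{m} (−1)^k C(n+k,k) · ((n+2k+1)/(n+k+m+1))·C(n+2m, m−k) = 0`,
while for `m = 0` the sum equals `1`. -/
theorem ballot_alternating_sum (n m : ℕ) :
    (∑ k ∈ Finset.range (m + 1),
        (-1 : ℤ) ^ k * (Nat.choose (n + k) k : ℤ) *
          (((n + 2 * k + 1) * Nat.choose (n + 2 * m) (m - k) / (n + k + m + 1) : ℕ) : ℤ)) =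
      if m = 0 then 1 else 0 := by
  rcases m with _ | j
  · simpa using Int.ediv_self (by positivity : (n : ℤ) + 1 ≠ 0)
  have hballot : ∀ k ∈ range (j + 2),
      (((n + 2 * k + 1) * (n + 2 * (j + 1)).choose (j + 1 - k) / (n + k + (j + 1) + 1) : ℕ) : ℤ) =
        (n + 2 * (j + 1)).choose (j + 1 - k) - (n + 2 * (j + 1)).choose (n + k + (j + 1) + 1) := by
    intro k hk
    have hk : k ≤ j + 1 := mem_range_succ_iff.mp hk
    have h := Nat.ballot_eq_choose_sub_choose (n + 2 * k) (j + 1 - k)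
    rwa [show n + 2 * k + 2 * (j + 1 - k) = n + 2 * (j + 1) by omega,
      show n + 2 * k + (j + 1 - k) + 1 = n + k + (j + 1) + 1 by omega] at h
  calc _ = ∑ k ∈ range (j + 2), ((-1 : ℤ) ^ k * (n + k).choose k *
          (n + 1 + (2 * j + 1)).choose (j + 1 - k) - (-1 : ℤ) ^ k * (n + k).choose k *
          (n + 2 * (j + 1)).choose (n + k + (j + 1) + 1)) :=
        sum_congr rfl fun k hk => by
          rw [hballot k hk, show n + 1 + (2 * j + 1) = n + 2 * (j + 1) by ring]; ring
    _ = (2 * j + 1).choose (j + 1) - (2 * j + 1).choose j := by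
        rw [sum_sub_distrib, Ring.sum_range_neg_one_pow_mul_choose_mul_choose,
          Ring.sum_range_neg_one_pow_mul_choose_mul_choose_reflect]
    _ = if j + 1 = 0 then 1 else 0 := by
        rw [Nat.choose_symm_half, sub_self, if_neg j.succ_ne_zero]
end
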